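/- arXiv:1612.00431 — 4 statements merged into one kernel-verified Lean document; each statement's English description precedes it below -/
import Mathlib

section
/- (Douglas' range inclusion theorem, direction (ii)⇒(i)) Let S and T be bounded linear operators on a Hilbert space H. If there exists λ ≥ 0 such that S S* ≤ λ² T T* (in the sense of positive operators), then range(S) ⊆ range(T). -/
/-!
The inequality `S S* ≤ λ² T T*` says `‖S* u‖ ≤ λ ‖T* u‖` for every `u`. Hence, for fixed `x`,
the functional `T* u ↦ ⟪S x, u⟫ = ⟪x, S* u⟫` is well defined and bounded on `range T*`;
extending it by Hahn–Banach and representing it by Riesz as `⟪y, ·⟫` gives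
`⟪T y, u⟫ = ⟪y, T* u⟫ = ⟪S x, u⟫` for all `u`, i.e. `T y = S x`.
-/

open ContinuousLinearMap

theorem LinearMap.exists_strongDual_comp_eq_of_norm_le {𝕜 E F : Type*} [RCLike 𝕜]
    [AddCommGroup E] [Module 𝕜 E] [NormedAddCommGroup F] [NormedSpace 𝕜 F]
    (f : E →ₗ[𝕜] F) (g : E →ₗ[𝕜] 𝕜) (C : ℝ) (h : ∀ u, ‖g u‖ ≤ C * ‖f u‖) :
    ∃ ψ : StrongDual 𝕜 F, ∀ u, ψ (f u) = g u := by
  have hker : LinearMap.ker f ≤ LinearMap.ker g := fun u hu => by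
    simpa [LinearMap.mem_ker.mp hu] using h u
  let φ : LinearMap.range f →ₗ[𝕜] 𝕜 :=
    (LinearMap.ker f).liftQ g hker ∘ₗ f.quotKerEquivRange.symm
  have hφ : ∀ u, φ ⟨f u, LinearMap.mem_range_self f u⟩ = g u := fun u => by simp [φ]
  have hφ_le : ∀ w, ‖φ w‖ ≤ C * ‖w‖ := by
    rintro ⟨_, u, rfl⟩
    rw [hφ]
    exact h u
  obtain ⟨ψ, hψ, -⟩ := exists_extension_norm_eq _ (φ.mkContinuous C hφ_le)
  exact ⟨ψ, fun u => (hψ ⟨f u, LinearMap.mem_range_self f u⟩).trans (hφ u)⟩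

namespace ContinuousLinearMap

variable {𝕜 E F G : Type*} [RCLike 𝕜]
  [NormedAddCommGroup E] [InnerProductSpace 𝕜 E] [CompleteSpace E]
  [NormedAddCommGroup F] [InnerProductSpace 𝕜 F] [CompleteSpace F]
  [NormedAddCommGroup G] [InnerProductSpace 𝕜 G] [CompleteSpace G]

theorem range_subset_range_of_norm_adjoint_apply_le (A : E →L[𝕜] F) (B : G →L[𝕜] F) (C : ℝ)
    (h : ∀ u, ‖adjoint A u‖ ≤ C * ‖adjoint B u‖) : Set.range A ⊆ Set.range B := by
  rintro _ ⟨x, rfl⟩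
  obtain ⟨ψ, hψ⟩ := (adjoint B : F →ₗ[𝕜] G).exists_strongDual_comp_eq_of_norm_le
    (innerSL 𝕜 (A x) : F →ₗ[𝕜] 𝕜) (C * ‖x‖) fun u =>
    calc ‖inner 𝕜 (A x) u‖ = ‖inner 𝕜 x (adjoint A u)‖ := by rw [adjoint_inner_right]
      _ ≤ ‖x‖ * ‖adjoint A u‖ := norm_inner_le_norm _ _
      _ ≤ ‖x‖ * (C * ‖adjoint B u‖) := by gcongr; exact h u
      _ = C * ‖x‖ * ‖adjoint B u‖ := by ring
  refine ⟨(InnerProductSpace.toDual 𝕜 G).symm ψ, ext_inner_right 𝕜 fun u => ?_⟩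
  rw [← adjoint_inner_right, InnerProductSpace.toDual_symm_apply]
  exact hψ u

theorem sq_norm_adjoint_apply_le_of_isPositive {A B : E →L[𝕜] F} {c : ℝ}
    (h : ((c : 𝕜) • (B ∘L adjoint B) - A ∘L adjoint A).IsPositive) (u : F) :
    ‖adjoint A u‖ ^ 2 ≤ c * ‖adjoint B u‖ ^ 2 := by
  have hre := h.re_inner_nonneg_left u
  simp only [sub_apply, smul_apply, comp_apply, inner_sub_left, inner_smul_left,
    ← adjoint_inner_right, inner_self_eq_norm_sq_to_K, RCLike.conj_ofReal, map_sub] at hre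
  norm_cast at hre
  exact sub_nonneg.mp hre

end ContinuousLinearMap

/-- Douglas' range inclusion theorem, direction (ii) ⇒ (i): if `S S* ≤ λ² T T*` for some
`λ ≥ 0`, then `range S ⊆ range T`. -/
theorem douglas_range_inclusion_of_operator_ineq
    {H : Type*} [NormedAddCommGroup H] [InnerProductSpace ℂ H] [CompleteSpace H]
    (S T : H →L[ℂ] H) (lam : ℝ) (hlam : 0 ≤ lam)
    (h : (((lam ^ 2 : ℝ) : ℂ) • (T ∘L adjoint T) - S ∘L adjoint S).IsPositive) :
    Set.range S ⊆ Set.range T := by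
  refine range_subset_range_of_norm_adjoint_apply_le S T lam fun u => ?_
  have hsq : ‖adjoint S u‖ ^ 2 ≤ (lam * ‖adjoint T u‖) ^ 2 :=
    (sq_norm_adjoint_apply_le_of_isPositive (c := lam ^ 2) h u).trans_eq (by ring)
  exact (pow_le_pow_iff_left₀ (norm_nonneg _) (by positivity) two_ne_zero).mp hsq
end

section
/- (Douglas' range inclusion theorem, direction (i)⇒(ii)) Let S and T be bounded linear operators on a Hilbert space H. If range(S) ⊆ range(T), then there exists λ ≥ 0 such that S S* ≤ λ² T T*. -/
/-!
Restricting `T` to `(ker T)ᗮ` makes it injective without changing its range, so `S = T C` for a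
linear map `C`, which is bounded by the closed graph theorem. Then
`S S* = T (C C*) T* ≤ ‖C‖² T T*`, because `C C* ≤ ‖C‖²` in the C⋆-algebra of operators.
-/

open ContinuousLinearMap

section Factorization

variable {𝕜 E F G : Type*} [NontriviallyNormedField 𝕜]
  [NormedAddCommGroup E] [NormedSpace 𝕜 E] [CompleteSpace E]
  [NormedAddCommGroup F] [NormedSpace 𝕜 F] [CompleteSpace F]
  [NormedAddCommGroup G] [NormedSpace 𝕜 G]

theorem ContinuousLinearMap.exists_comp_eq_of_injective_of_range_subset
    (S : E →L[𝕜] G) {T : F →L[𝕜] G} (hT : Function.Injective T)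
    (h : Set.range S ⊆ Set.range T) : ∃ C : E →L[𝕜] F, T ∘L C = S := by
  have hST : ∀ x, S x ∈ LinearMap.range (T : F →ₗ[𝕜] G) := fun x => h ⟨x, rfl⟩
  let C : E →ₗ[𝕜] F := (LinearEquiv.ofInjective (T : F →ₗ[𝕜] G) hT).symm.toLinearMap ∘ₗ
    (S : E →ₗ[𝕜] G).codRestrict _ hST
  have hTC : ∀ x, T (C x) = S x := fun x =>
    LinearEquiv.ofInjective_symm_apply (h := hT) (T : F →ₗ[𝕜] G) _
  -- closed graph: if `u → x` and `C u → y`, then `T y = lim S u = S x = T (C x)`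
  have hC : Continuous C := C.continuous_of_seq_closed_graph fun u x y hu hCu => hT <| by
    refine tendsto_nhds_unique ((T.continuous.tendsto y).comp hCu) ?_
    simpa only [Function.comp_def, hTC] using (S.continuous.tendsto x).comp hu
  exact ⟨⟨C, hC⟩, ext hTC⟩

end Factorization

theorem ContinuousLinearMap.exists_comp_eq_of_range_subset {𝕜 E F G : Type*} [RCLike 𝕜]
    [NormedAddCommGroup E] [NormedSpace 𝕜 E] [CompleteSpace E]
    [NormedAddCommGroup F] [InnerProductSpace 𝕜 F] [CompleteSpace F]
    [NormedAddCommGroup G] [NormedSpace 𝕜 G]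
    (S : E →L[𝕜] G) (T : F →L[𝕜] G) (h : Set.range S ⊆ Set.range T) :
    ∃ C : E →L[𝕜] F, T ∘L C = S := by
  set K := (T : F →ₗ[𝕜] G).kerᗮ
  have hinj : Function.Injective (T ∘L K.subtypeL) := by
    refine (injective_iff_map_eq_zero _).2 fun w hw => Subtype.ext ?_
    exact Submodule.disjoint_def.1 (T : F →ₗ[𝕜] G).ker.orthogonal_disjoint w hw w.2
  have hrange : Set.range T ⊆ Set.range (T ∘L K.subtypeL) := by
    rintro _ ⟨z, rfl⟩
    obtain ⟨y, hy, w, hw, rfl⟩ := (T : F →ₗ[𝕜] G).ker.exists_add_mem_mem_orthogonal z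
    exact ⟨⟨w, hw⟩, by simp [show T y = 0 from hy]⟩
  obtain ⟨C, hC⟩ := exists_comp_eq_of_injective_of_range_subset S hinj (h.trans hrange)
  exact ⟨K.subtypeL ∘L C, by rw [← hC]; rfl⟩

theorem CStarAlgebra.mul_mul_star_le_norm_sq_smul {A : Type*} [CStarAlgebra A] [PartialOrder A]
    [StarOrderedRing A] (b c : A) : b * c * star (b * c) ≤ ‖c‖ ^ 2 • (b * star b) :=
  calc b * c * star (b * c) = b * (c * star c) * star b := by
        rw [star_mul, mul_assoc, mul_assoc, mul_assoc]
    _ ≤ b * algebraMap ℝ A (‖c‖ ^ 2) * star b :=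
        star_right_conjugate_le_conjugate CStarAlgebra.mul_star_le_algebraMap_norm_sq b
    _ = ‖c‖ ^ 2 • (b * star b) := by
        rw [Algebra.algebraMap_eq_smul_one, mul_smul_one, smul_mul_assoc]

/-- Douglas' range inclusion theorem, direction (i) ⇒ (ii): if `range S ⊆ range T`, then
there exists `λ ≥ 0` with `S S* ≤ λ² T T*`. -/
theorem douglas_operator_ineq_of_range_inclusion
    {H : Type*} [NormedAddCommGroup H] [InnerProductSpace ℂ H] [CompleteSpace H]
    (S T : H →L[ℂ] H) (h : Set.range S ⊆ Set.range T) :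
    ∃ lam : ℝ, 0 ≤ lam ∧
      (((lam ^ 2 : ℝ) : ℂ) • (T ∘L adjoint T) - S ∘L adjoint S).IsPositive := by
  obtain ⟨C, rfl⟩ := exists_comp_eq_of_range_subset S T h
  refine ⟨‖C‖, norm_nonneg C, ?_⟩
  rw [Complex.coe_smul, ← ContinuousLinearMap.le_def]
  exact CStarAlgebra.mul_mul_star_le_norm_sq_smul T C
end

section
/- Let G be a bounded positive self-adjoint operator on a Hilbert space H. If there exist constants C ≥ A > 0 with A·G ≤ C·G², then range(G^{1/2}) = range(G), and consequently range(G) is closed. -/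
/-!
With `G = R²`, the hypothesis gives `A ‖R x‖² = A ⟪G x, x⟫ ≤ C ‖G x‖² = C ‖R (R x)‖²`, so `R` is
bounded below on its range and, by continuity, on the closure of its range, which is `(ker R)ᗮ`
since `R` is self-adjoint. Hence `range R` is closed, so it equals `(ker R)ᗮ`, and
`range G = R '' range R = R '' (ker R)ᗮ = range R`.
-/

open ContinuousLinearMap

namespace ContinuousLinearMap

variable {𝕜 E F : Type*} [RCLike 𝕜] [NormedAddCommGroup E] [InnerProductSpace 𝕜 E]
  [CompleteSpace E] [NormedAddCommGroup F] [NormedSpace 𝕜 F]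

theorem map_orthogonal_ker (T : E →L[𝕜] F) : T.kerᗮ.map (T : E →ₗ[𝕜] F) = T.range := by
  rw [LinearMap.range_eq_map, ← T.ker.sup_orthogonal_of_hasOrthogonalProjection,
    Submodule.map_sup, LinearMap.le_ker_iff_map.mp le_rfl, bot_sup_eq]

theorem image_orthogonal_ker (T : E →L[𝕜] F) : T '' T.kerᗮ = Set.range T := by
  ext y
  simpa using congrArg (y ∈ ·) T.map_orthogonal_ker

theorem isClosed_range_of_norm_le_mul_norm_apply {T : E →L[𝕜] F} {c : ℝ}
    (h : ∀ x ∈ T.kerᗮ, ‖x‖ ≤ c * ‖T x‖) : IsClosed (Set.range T) := by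
  set S := T ∘L T.kerᗮ.subtypeL
  have hS : Set.range S = Set.range T := by
    rw [← T.image_orthogonal_ker]
    ext
    simp [S]
  have hanti : AntilipschitzWith c.toNNReal S := S.antilipschitz_of_bound fun x =>
    (h x x.2).trans (by gcongr; exacts [Real.le_coe_toNNReal c, le_rfl])
  exact hS ▸ hanti.isClosed_range S.uniformContinuous

end ContinuousLinearMap

theorem le_sqrt_div_mul_of_mul_sq_le {a b A C : ℝ} (hA : 0 < A) (hb : 0 ≤ b)
    (h : A * a ^ 2 ≤ C * b ^ 2) : a ≤ √(C / A) * b :=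
  calc a ≤ |a| := le_abs_self a
    _ ≤ √(C / A * b ^ 2) := Real.abs_le_sqrt (by rw [div_mul_eq_mul_div, le_div_iff₀ hA]; linarith)
    _ = √(C / A) * b := by rw [Real.sqrt_mul' _ (sq_nonneg b), Real.sqrt_sq hb]

namespace IsSelfAdjoint

open RCLike

variable {𝕜 E : Type*} [RCLike 𝕜] [NormedAddCommGroup E] [InnerProductSpace 𝕜 E]
  [CompleteSpace E] {T : E →L[𝕜] E}

theorem closure_range (hT : IsSelfAdjoint T) : closure (Set.range T) = T.kerᗮ := by
  rw [orthogonal_ker, hT.adjoint_eq, Submodule.topologicalClosure_coe]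
  rfl

theorem re_inner_comp_self_apply (hT : IsSelfAdjoint T) (x : E) :
    re (inner 𝕜 ((T ∘L T) x) x) = ‖T x‖ ^ 2 := by
  rw [apply_norm_sq_eq_inner_adjoint_left, hT.adjoint_eq]

theorem mul_norm_sq_le_of_isPositive_smul_comp_self_sub_smul
    {R G : E →L[𝕜] E} (hR : IsSelfAdjoint R) (hG : IsSelfAdjoint G) (hRG : R ∘L R = G)
    {A C : ℝ} (h : ((C : 𝕜) • (G ∘L G) - (A : 𝕜) • G).IsPositive) (x : E) :
    A * ‖R x‖ ^ 2 ≤ C * ‖G x‖ ^ 2 := by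
  subst hRG
  have := h.re_inner_nonneg_left x
  simp only [sub_apply, smul_apply, inner_sub_left, inner_smul_left, map_sub, conj_ofReal,
    re_ofReal_mul, hG.re_inner_comp_self_apply, hR.re_inner_comp_self_apply] at this
  linarith

theorem isClosed_range_of_norm_le_mul_norm_apply_self (hT : IsSelfAdjoint T) {c : ℝ}
    (h : ∀ x, ‖T x‖ ≤ c * ‖T (T x)‖) : IsClosed (Set.range T) := by
  refine isClosed_range_of_norm_le_mul_norm_apply (c := c) fun y hy => ?_
  rw [← SetLike.mem_coe, ← hT.closure_range] at hy
  have hclosed : IsClosed {y | ‖y‖ ≤ c * ‖T y‖} := isClosed_le (by fun_prop) (by fun_prop)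
  refine closure_minimal ?_ hclosed hy
  rintro _ ⟨x, rfl⟩
  exact h x

theorem range_comp_self_of_isClosed (hT : IsSelfAdjoint T) (hc : IsClosed (Set.range T)) :
    Set.range (T ∘L T) = Set.range T := by
  have hker : (T.kerᗮ : Set E) = Set.range T := by rw [← hT.closure_range, hc.closure_eq]
  rw [coe_comp, Set.range_comp, ← hker, image_orthogonal_ker, hker]

end IsSelfAdjoint

theorem range_sqrt_eq_range_of_ineq_general
    {H : Type*} [NormedAddCommGroup H] [InnerProductSpace ℂ H] [CompleteSpace H]
    (G : H →L[ℂ] H) (hG : G.IsPositive)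
    (A C : ℝ) (hA : 0 < A)
    (h : (((C : ℂ) • (G ∘L G)) - ((A : ℂ) • G)).IsPositive)
    (R : H →L[ℂ] H) (hR : R.IsPositive) (hR2 : R ∘L R = G) :
    Set.range R = Set.range G ∧ IsClosed (Set.range G) := by
  have hbound (x : H) : ‖R x‖ ≤ √(C / A) * ‖R (R x)‖ := by
    have := hR.isSelfAdjoint.mul_norm_sq_le_of_isPositive_smul_comp_self_sub_smul
      hG.isSelfAdjoint hR2 h x
    rw [← hR2, comp_apply] at this
    exact le_sqrt_div_mul_of_mul_sq_le hA (norm_nonneg _) this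
  have hclosed := hR.isSelfAdjoint.isClosed_range_of_norm_le_mul_norm_apply_self hbound
  have hrange : Set.range R = Set.range G := by
    rw [← hR2, hR.isSelfAdjoint.range_comp_self_of_isClosed hclosed]
  exact ⟨hrange, hrange ▸ hclosed⟩

/-- If `G` is a bounded positive self-adjoint operator with `A·G ≤ C·G²` for some constants
`C ≥ A > 0`, then `range (G^{1/2}) = range G`; consequently `range G` is closed. Here the
positive square root is any positive operator `R` with `R² = G`. -/
theorem range_sqrt_eq_range_of_ineq
    {H : Type*} [NormedAddCommGroup H] [InnerProductSpace ℂ H] [CompleteSpace H]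
    (G : H →L[ℂ] H) (hG : G.IsPositive)
    (A C : ℝ) (hA : 0 < A) (hAC : A ≤ C)
    (h : (((C : ℂ) • (G ∘L G)) - ((A : ℂ) • G)).IsPositive)
    (R : H →L[ℂ] H) (hR : R.IsPositive) (hR2 : R ∘L R = G) :
    Set.range R = Set.range G ∧ IsClosed (Set.range G) :=
  range_sqrt_eq_range_of_ineq_general G hG A C hA h R hR hR2
end

section
/- (Fundamental identity for J-fusion frames, abstract form) Let H be a Hilbert space with fundamental symmetry J and indefinite inner product [f,g] = ⟪Jf,g⟫. Let S be a bounded bijective J-self-adjoint operator on H and S = S₁ + S₂ a decomposition into bounded operators, each J-self-adjoint. Then for all f ∈ H: [S₁ f, f] − [S⁻¹ S₁ f, S₁ f] = [S₂ f, f] − [S⁻¹ S₂ f, S₂ f]. -/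
/-!
Put `A = S⁻¹S₁` and `B = S⁻¹S₂`. Then `A + B = 1`, so `A - A² = AB = BA = B - B²`. Pairing this
operator identity with `Sf` in the form `[·,·]` and moving `S` and `S₁` (resp. `S₂`) across it by
`J`-self-adjointness turns `[(A - A²) f, Sf]` into `[S₁ f, f] - [S⁻¹S₁ f, S₁ f]`.
-/

open ContinuousLinearMap

theorem sub_mul_self_eq_sub_mul_self_of_add_eq_one {R : Type*} [Ring R] {a b : R}
    (h : a + b = 1) : a - a * a = b - b * b := by
  rw [eq_sub_of_add_eq h]
  noncomm_ring

section JSelfAdjoint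

variable {H : Type*} [NormedAddCommGroup H] [InnerProductSpace ℂ H] [CompleteSpace H]
  {J : H →L[ℂ] H}

theorem inner_J_apply_left_of_eq_J_adjoint_J (hJ2 : J ∘L J = 1) {T : H →L[ℂ] H}
    (hT : T = J ∘L adjoint T ∘L J) (x y : H) :
    inner ℂ (J (T x)) y = inner ℂ (J x) (T y) := by
  have hJT : J (T x) = adjoint T (J x) := by
    conv_lhs => rw [hT]
    simpa using congrArg (· (adjoint T (J x))) hJ2
  rw [hJT, adjoint_inner_left]

theorem inner_J_apply_rightInverse_apply {S Sinv : H →L[ℂ] H} (hJ2 : J ∘L J = 1)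
    (hS : S = J ∘L adjoint S ∘L J) (hr : S ∘L Sinv = 1) (x y : H) :
    inner ℂ (J (Sinv x)) (S y) = inner ℂ (J x) y := by
  rw [← inner_J_apply_left_of_eq_J_adjoint_J hJ2 hS, ← comp_apply S Sinv, hr, one_apply_eq_self]

theorem inner_J_sub_inner_J_eq_inner_J_sub_mul_self {S Sinv T : H →L[ℂ] H} (hJ2 : J ∘L J = 1)
    (hS : S = J ∘L adjoint S ∘L J) (hr : S ∘L Sinv = 1) (hT : T = J ∘L adjoint T ∘L J)
    (f : H) :
    inner ℂ (J (T f)) f - inner ℂ (J (Sinv (T f))) (T f)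
      = inner ℂ (J ((Sinv ∘L T - (Sinv ∘L T) * (Sinv ∘L T)) f)) (S f) := by
  simp only [sub_apply, mul_apply_eq_comp, comp_apply, map_sub, inner_sub_left,
    inner_J_apply_rightInverse_apply hJ2 hS hr, inner_J_apply_left_of_eq_J_adjoint_J hJ2 hT]

end JSelfAdjoint

theorem fundamental_identity_J_fusion_general
    {H : Type*} [NormedAddCommGroup H] [InnerProductSpace ℂ H] [CompleteSpace H]
    (J : H →L[ℂ] H) (hJ2 : J ∘L J = 1)
    (S Sinv S₁ S₂ : H →L[ℂ] H)
    (hSsa : S = J ∘L adjoint S ∘L J)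
    (hS₁sa : S₁ = J ∘L adjoint S₁ ∘L J)
    (hS₂sa : S₂ = J ∘L adjoint S₂ ∘L J)
    (hl : Sinv ∘L S = 1) (hr : S ∘L Sinv = 1)
    (hsum : S = S₁ + S₂) :
    ∀ f : H,
      (inner ℂ (J (S₁ f)) f : ℂ) - inner ℂ (J (Sinv (S₁ f))) (S₁ f)
        = (inner ℂ (J (S₂ f)) f : ℂ) - inner ℂ (J (Sinv (S₂ f))) (S₂ f) := by
  intro f
  have hsplit : Sinv ∘L S₁ + Sinv ∘L S₂ = 1 := by rw [← comp_add, ← hsum, hl]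
  rw [inner_J_sub_inner_J_eq_inner_J_sub_mul_self hJ2 hSsa hr hS₁sa,
    inner_J_sub_inner_J_eq_inner_J_sub_mul_self hJ2 hSsa hr hS₂sa,
    sub_mul_self_eq_sub_mul_self_of_add_eq_one hsplit]

/-- Fundamental identity for `J`-fusion frames, abstract form: if `S` is a bounded bijective
`J`-self-adjoint operator with bounded inverse `Sinv`, and `S = S₁ + S₂` with `S₁, S₂`
`J`-self-adjoint, then for all `f`,
`[S₁ f, f] − [S⁻¹S₁ f, S₁ f] = [S₂ f, f] − [S⁻¹S₂ f, S₂ f]` where `[f,g] = ⟪Jf,g⟫`. -/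
theorem fundamental_identity_J_fusion
    {H : Type*} [NormedAddCommGroup H] [InnerProductSpace ℂ H] [CompleteSpace H]
    (J : H →L[ℂ] H) (hJ2 : J ∘L J = 1) (hJsa : IsSelfAdjoint J)
    (S Sinv S₁ S₂ : H →L[ℂ] H)
    (hSsa : S = J ∘L adjoint S ∘L J)
    (hS₁sa : S₁ = J ∘L adjoint S₁ ∘L J)
    (hS₂sa : S₂ = J ∘L adjoint S₂ ∘L J)
    (hl : Sinv ∘L S = 1) (hr : S ∘L Sinv = 1)
    (hsum : S = S₁ + S₂) :
    ∀ f : H,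
      (inner ℂ (J (S₁ f)) f : ℂ) - inner ℂ (J (Sinv (S₁ f))) (S₁ f)
        = (inner ℂ (J (S₂ f)) f : ℂ) - inner ℂ (J (Sinv (S₂ f))) (S₂ f) :=
  fundamental_identity_J_fusion_general J hJ2 S Sinv S₁ S₂ hSsa hS₁sa hS₂sa hl hr hsum
end
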